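/- arXiv:1706.08014 — 2 statements merged into one kernel-verified Lean document; each statement's English description precedes it below -/
import Mathlib

section
/- Let β ≥ 1, b > 0, and let ν be a finite positive Borel measure on ℂ that has all exponential moments and for which there exists R > 0 with ν({λ ∈ ℂ : Re λ < b·|Im λ|^(1/β) and |λ| > R}) = 0. Then for every s > 0 and every t ≥ 0, ∫_ℂ e^(s·|λ|^(1/β)) · e^(t·Re λ) dν(λ) < ∞. -/
/-!
Off a ball of radius `R`, the measure lives on the region `b·|Im λ|^p ≤ Re λ` (with `p = 1/β`),
where subadditivity of `x ↦ x^p` gives `|λ|^p ≤ (Re λ)^p + |Im λ|^p ≤ 1 + (1 + 1/b)·Re λ`.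
On the ball `|λ|^p` is bounded and `Re λ ≥ -R`, so everywhere off a null set
`s·|λ|^p + t·Re λ ≤ K + (t + s(1 + 1/b))·Re λ`, and the integral is dominated by a constant times
an exponential moment of `ν`.
-/

open MeasureTheory

lemma Real.rpow_le_one_add {x p : ℝ} (hx : 0 ≤ x) (hp : 0 ≤ p) (hp1 : p ≤ 1) :
    x ^ p ≤ 1 + x :=
  calc x ^ p ≤ (1 + x) ^ p := Real.rpow_le_rpow hx (by linarith) hp
    _ ≤ 1 + x := Real.rpow_le_self_of_one_le (by linarith) hp1

lemma lintegral_ofReal_exp_lt_top_of_ae_le_const_add {α : Type*} [MeasurableSpace α]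
    {μ : Measure α} {f g : α → ℝ} (C : ℝ) (hfg : ∀ᵐ x ∂μ, f x ≤ C + g x)
    (hg : ∫⁻ x, ENNReal.ofReal (Real.exp (g x)) ∂μ < ⊤) :
    ∫⁻ x, ENNReal.ofReal (Real.exp (f x)) ∂μ < ⊤ :=
  calc ∫⁻ x, ENNReal.ofReal (Real.exp (f x)) ∂μ
      ≤ ∫⁻ x, ENNReal.ofReal (Real.exp C) * ENNReal.ofReal (Real.exp (g x)) ∂μ := by
        refine lintegral_mono_ae (hfg.mono fun x hx ↦ ?_)
        rw [← ENNReal.ofReal_mul (Real.exp_pos C).le, ← Real.exp_add]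
        exact ENNReal.ofReal_le_ofReal (Real.exp_le_exp.2 hx)
    _ = ENNReal.ofReal (Real.exp C) * ∫⁻ x, ENNReal.ofReal (Real.exp (g x)) ∂μ :=
        lintegral_const_mul' _ _ ENNReal.ofReal_ne_top
    _ < ⊤ := ENNReal.mul_lt_top ENNReal.ofReal_lt_top hg

namespace Complex

variable {p b : ℝ} {z : ℂ}

lemma norm_rpow_le_of_mul_abs_im_rpow_le_re (hp : 0 ≤ p) (hp1 : p ≤ 1) (hb : 0 < b)
    (hz : b * |z.im| ^ p ≤ z.re) : ‖z‖ ^ p ≤ 1 + (1 + 1 / b) * z.re := by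
  have hre : 0 ≤ z.re := le_trans (by positivity) hz
  have him : |z.im| ^ p ≤ z.re / b := by rwa [le_div_iff₀ hb, mul_comm]
  have hnorm : ‖z‖ ≤ z.re + |z.im| := by simpa [abs_of_nonneg hre] using norm_le_abs_re_add_abs_im z
  calc ‖z‖ ^ p ≤ (z.re + |z.im|) ^ p := Real.rpow_le_rpow (norm_nonneg z) hnorm hp
    _ ≤ z.re ^ p + |z.im| ^ p := Real.rpow_add_le_add_rpow hre (abs_nonneg _) hp hp1
    _ ≤ 1 + z.re + z.re / b := add_le_add (Real.rpow_le_one_add hre hp hp1) him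
    _ = 1 + (1 + 1 / b) * z.re := by ring

lemma norm_rpow_le_const_add_mul_re {R : ℝ} (hp : 0 ≤ p) (hp1 : p ≤ 1) (hb : 0 < b) (hR : 0 ≤ R)
    (hz : ¬(z.re < b * |z.im| ^ p ∧ R < ‖z‖)) :
    ‖z‖ ^ p ≤ (1 + R ^ p + (1 + 1 / b) * R) + (1 + 1 / b) * z.re := by
  have hc : 0 ≤ 1 + 1 / b := by positivity
  rcases lt_or_ge z.re (b * |z.im| ^ p) with hlt | hge
  · have hzR : ‖z‖ ≤ R := not_lt.1 fun h ↦ hz ⟨hlt, h⟩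
    have hre : -R ≤ z.re := by linarith [neg_abs_le z.re, abs_re_le_norm z]
    have hpow : ‖z‖ ^ p ≤ R ^ p := Real.rpow_le_rpow (norm_nonneg z) hzR hp
    nlinarith
  · have := norm_rpow_le_of_mul_abs_im_rpow_le_re hp hp1 hb hge
    have : 0 ≤ R ^ p + (1 + 1 / b) * R := by positivity
    linarith

end Complex

theorem stmt_2_general (β b : ℝ) (hβ : 1 ≤ β) (hb : 0 < b)
    (ν : Measure ℂ)
    (hexp : ∀ t : ℝ, 0 ≤ t → ∫⁻ z, ENNReal.ofReal (Real.exp (t * z.re)) ∂ν < ⊤)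
    (hcarr : ∃ R > (0 : ℝ),
      ν {z : ℂ | z.re < b * |z.im| ^ (1 / β) ∧ R < ‖z‖} = 0) :
    ∀ s > (0 : ℝ), ∀ t ≥ (0 : ℝ),
      ∫⁻ z, ENNReal.ofReal
        (Real.exp (s * ‖z‖ ^ (1 / β)) * Real.exp (t * z.re)) ∂ν < ⊤ := by
  intro s hs t ht
  obtain ⟨R, hR, hnull⟩ := hcarr
  have hp : 0 ≤ 1 / β := by positivity
  have hp1 : 1 / β ≤ 1 := (div_le_one (by linarith)).2 hβ
  set c := 1 + 1 / b
  have hoff : ∀ᵐ z ∂ν, ¬(z.re < b * |z.im| ^ (1 / β) ∧ R < ‖z‖) := ae_iff.2 (by simpa using hnull)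
  simp_rw [← Real.exp_add]
  refine lintegral_ofReal_exp_lt_top_of_ae_le_const_add (s * (1 + R ^ (1 / β) + c * R))
    (hoff.mono fun z hz ↦ ?_) (hexp (t + s * c) (by positivity))
  have := mul_le_mul_of_nonneg_left
    (Complex.norm_rpow_le_const_add_mul_re hp hp1 hb hR.le hz) hs.le
  linarith

/-- Let `β ≥ 1`, `b > 0`, and let `ν` be a finite positive Borel measure on `ℂ` with all
exponential moments such that for some `R > 0` the set
`{λ : Re λ < b·|Im λ|^(1/β) and |λ| > R}` is `ν`-null. Then for every `s > 0` and `t ≥ 0`,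
`∫ e^(s·|λ|^(1/β)) · e^(t·Re λ) dν(λ) < ∞`. -/
theorem stmt_2 (β b : ℝ) (hβ : 1 ≤ β) (hb : 0 < b)
    (ν : Measure ℂ) [IsFiniteMeasure ν]
    (hexp : ∀ t : ℝ, 0 ≤ t → ∫⁻ z, ENNReal.ofReal (Real.exp (t * z.re)) ∂ν < ⊤)
    (hcarr : ∃ R > (0 : ℝ),
      ν {z : ℂ | z.re < b * |z.im| ^ (1 / β) ∧ R < ‖z‖} = 0) :
    ∀ s > (0 : ℝ), ∀ t ≥ (0 : ℝ),
      ∫⁻ z, ENNReal.ofReal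
        (Real.exp (s * ‖z‖ ^ (1 / β)) * Real.exp (t * z.re)) ∂ν < ⊤ :=
  stmt_2_general β b hβ hb ν hexp hcarr
end

section
/- Let β ≥ 1 and let S ⊆ ℂ be a Borel set. Suppose that for every finite positive Borel measure ν on ℂ with ν(ℂ ∖ S) = 0 that has all exponential moments there exists some s > 0 with ∫_ℂ e^(s·|λ|^(1/β)) dν(λ) < ∞. Then for every such measure ν, every s > 0, and every t ≥ 0, ∫_ℂ e^(s·|λ|^(1/β)) · e^(t·Re λ) dν(λ) < ∞. -/
/-! Write `φ z = ‖z‖ ^ (1 / β)` and `ρ = re`. The set `B` of those `s` for which `e^{s φ} ν` has all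
exponential moments contains `0` and is a lower set, so it suffices that it is unbounded above.
If `s_k ∈ B` increase to `sup B < ∞`, then for small enough weights `c_{k,n} > 0` the measure
`μ = ∑ c_{k,n} e^{s_k φ + n ρ} ν` still has all exponential moments and is absolutely continuous
with respect to `ν`. The hypothesis gives a single `δ > 0` with `∫ e^{δ φ} dμ < ∞`, that is
`∫ e^{(s_k + δ) φ + n ρ} dν < ∞` for all `k` and `n`; hence `s_k + δ ∈ B`, which exceeds
`sup B` for large `k`. -/

open MeasureTheory Real Set
open scoped ENNReal

theorem ENNReal.exists_ne_zero_forall_tsum_mul_ne_top {ι : Type*} [Countable ι]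
    (f : ι → ℕ → ℝ≥0∞) (hf : ∀ i n, f i n ≠ ∞) :
    ∃ c : ι → ℝ≥0∞, (∀ i, c i ≠ 0) ∧ ∀ n, ∑' i, c i * f i n ≠ ∞ := by
  obtain ⟨e, he⟩ := Countable.exists_injective_nat ι
  set G : ι → ℝ≥0∞ := fun i => ∑ m ∈ Finset.range (e i + 1), f i m
  have hG : ∀ i, G i ≠ ∞ := fun i => ENNReal.sum_ne_top.2 fun m _ => hf i m
  refine ⟨fun i => 2⁻¹ ^ e i / (1 + G i), fun i => by simp [hG i], fun n => ?_⟩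
  -- once `n ≤ e i`, the `i`-th term is at most `2⁻¹ ^ e i`; only finitely many `i` have `e i < n`
  have hfin : (e ⁻¹' Iio n).Finite := (finite_Iio n).preimage he.injOn
  rw [← ENNReal.sum_add_tsum_compl hfin.toFinset]
  refine ENNReal.add_ne_top.2 ⟨ENNReal.sum_ne_top.2 fun i _ => ?_, ?_⟩
  · exact ENNReal.mul_ne_top (ENNReal.div_ne_top (by simp) (by simp)) (hf i n)
  have hle : ∀ i : ↥(hfin.toFinset : Set ι)ᶜ, 2⁻¹ ^ e i / (1 + G i) * f i n ≤ 2⁻¹ ^ e i := by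
    intro i
    have hni : n ≤ e i := by simpa using i.2
    rw [div_eq_mul_inv, mul_right_comm, ← div_eq_mul_inv]
    refine ENNReal.div_le_of_le_mul (mul_le_mul_right ?_ _)
    exact (Finset.single_le_sum (fun m _ => zero_le) (Finset.mem_range_succ_iff.2 hni)).trans
      le_add_self
  refine ne_top_of_le_ne_top ?_ ((ENNReal.tsum_le_tsum hle).trans
    (ENNReal.tsum_comp_le_tsum_of_injective (he.comp Subtype.val_injective) (2⁻¹ ^ ·)))
  simp [ENNReal.tsum_geometric]

theorem IsLowerSet.eq_univ_of_forall_exists_add {B : Set ℝ} (hB : IsLowerSet B)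
    (hne : B.Nonempty) (h : ∀ s : ℕ → ℝ, (∀ k, s k ∈ B) → ∃ δ > 0, ∀ k, s k + δ ∈ B) :
    B = univ := by
  refine eq_univ_of_forall fun x => by_contra fun hx => ?_
  have hbdd : BddAbove B := ⟨x, fun b hb => le_of_not_ge fun hxb => hx (hB hxb hb)⟩
  have hs : ∀ k : ℕ, sSup B - 1 / (k + 1) ∈ B := fun k => by
    obtain ⟨b, hb, hlt⟩ := exists_lt_of_lt_csSup hne (sub_lt_self _ Nat.one_div_pos_of_nat)
    exact hB hlt.le hb
  obtain ⟨δ, hδ, hδB⟩ := h _ hs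
  obtain ⟨K, hK⟩ := exists_nat_one_div_lt hδ
  linarith [le_csSup hbdd (hδB K)]

theorem MeasureTheory.lintegral_withDensity_comm {α : Type*} [MeasurableSpace α] (μ : Measure α)
    {f g : α → ℝ≥0∞} (hf : Measurable f) (hg : Measurable g) :
    ∫⁻ x, g x ∂μ.withDensity f = ∫⁻ x, f x ∂μ.withDensity g := by
  rw [lintegral_withDensity_eq_lintegral_mul _ hf hg,
    lintegral_withDensity_eq_lintegral_mul _ hg hf, mul_comm]

noncomputable def expWeight {α : Type*} (f : α → ℝ) (s : ℝ) (x : α) : ℝ≥0∞ :=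
  ENNReal.ofReal (exp (s * f x))

def HasExpMoments {α : Type*} [MeasurableSpace α] (ρ : α → ℝ) (ν : Measure α) : Prop :=
  ∀ t : ℝ, 0 ≤ t → ∫⁻ x, expWeight ρ t x ∂ν < ⊤

section
variable {α : Type*} {f : α → ℝ}

theorem expWeight_zero : expWeight f 0 = 1 := by
  ext x
  simp [expWeight]

theorem expWeight_add (s t : ℝ) : expWeight f (s + t) = expWeight f s * expWeight f t := by
  ext x
  simp only [expWeight, Pi.mul_apply, add_mul, exp_add, ENNReal.ofReal_mul (exp_pos _).le]

theorem expWeight_mono (hf : 0 ≤ f) : Monotone (expWeight f) := fun _ _ hst x =>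
  ENNReal.ofReal_le_ofReal (exp_le_exp.2 (mul_le_mul_of_nonneg_right hst (hf x)))

theorem expWeight_le_one_add {t u : ℝ} (ht : 0 ≤ t) (htu : t ≤ u) (x : α) :
    expWeight f t x ≤ 1 + expWeight f u x := by
  rw [expWeight, expWeight, ← ENNReal.ofReal_one, ← ENNReal.ofReal_add zero_le_one (exp_pos _).le]
  refine ENNReal.ofReal_le_ofReal ?_
  rcases le_total 0 (f x) with hx | hx
  · linarith [exp_le_exp.2 (mul_le_mul_of_nonneg_right htu hx), exp_pos (u * f x)]
  · linarith [exp_le_one_iff.2 (mul_nonpos_of_nonneg_of_nonpos ht hx), exp_pos (u * f x)]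

end

section
variable {α : Type*} [MeasurableSpace α] {f ρ φ : α → ℝ} {μ ν : Measure α}

theorem measurable_expWeight (hf : Measurable f) (s : ℝ) : Measurable (expWeight f s) :=
  (hf.const_mul s).exp.ennreal_ofReal

theorem HasExpMoments.isFiniteMeasure (h : HasExpMoments ρ ν) : IsFiniteMeasure ν :=
  ⟨by simpa [expWeight] using h 0 le_rfl⟩

theorem HasExpMoments.mono (h : HasExpMoments ρ μ) (hνμ : ν ≤ μ) : HasExpMoments ρ ν :=
  fun t ht => (lintegral_mono' hνμ le_rfl).trans_lt (h t ht)

theorem hasExpMoments_of_nat (h : ∀ n : ℕ, ∫⁻ x, expWeight ρ n x ∂ν < ⊤) :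
    HasExpMoments ρ ν := by
  intro t ht
  obtain ⟨n, hn⟩ := exists_nat_ge t
  calc ∫⁻ x, expWeight ρ t x ∂ν ≤ ∫⁻ x, 1 + expWeight ρ n x ∂ν :=
        lintegral_mono (expWeight_le_one_add ht hn)
    _ = ν univ + ∫⁻ x, expWeight ρ n x ∂ν := by
        rw [lintegral_add_left measurable_const, lintegral_one]
    _ < ⊤ := ENNReal.add_lt_top.2 ⟨by simpa [expWeight] using h 0, h n⟩

theorem HasExpMoments.withDensity_expWeight (hρ : Measurable ρ) (h : HasExpMoments ρ ν)
    {u : ℝ} (hu : 0 ≤ u) : HasExpMoments ρ (ν.withDensity (expWeight ρ u)) := fun t ht => by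
  rw [lintegral_withDensity_eq_lintegral_mul _ (measurable_expWeight hρ u)
    (measurable_expWeight hρ t), ← expWeight_add]
  exact h _ (add_nonneg hu ht)

theorem exists_hasExpMoments_sum_smul {ι : Type*} [Countable ι]
    {ν : ι → Measure α} (h : ∀ i, HasExpMoments ρ (ν i)) :
    ∃ c : ι → ℝ≥0∞, (∀ i, c i ≠ 0) ∧ HasExpMoments ρ (Measure.sum fun i => c i • ν i) := by
  obtain ⟨c, hc0, hc⟩ := ENNReal.exists_ne_zero_forall_tsum_mul_ne_top
    (fun i n => ∫⁻ x, expWeight ρ n x ∂ν i) fun i n => (h i n n.cast_nonneg).ne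
  refine ⟨c, hc0, hasExpMoments_of_nat fun n => ?_⟩
  simpa [lintegral_sum_measure, lintegral_smul_measure, lt_top_iff_ne_top] using hc n

theorem exists_pos_forall_hasExpMoments_withDensity_add {ι : Type*} [Countable ι]
    (hρ : Measurable ρ) (hφ : Measurable φ)
    (h : ∀ μ, μ ≪ ν → IsFiniteMeasure μ → HasExpMoments ρ μ →
      ∃ δ > 0, ∫⁻ x, expWeight φ δ x ∂μ < ⊤)
    {s : ι → ℝ} (hs : ∀ i, HasExpMoments ρ (ν.withDensity (expWeight φ (s i)))) :
    ∃ δ > 0, ∀ i, HasExpMoments ρ (ν.withDensity (expWeight φ (s i + δ))) := by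
  set νs : ι × ℕ → Measure α := fun p =>
    (ν.withDensity (expWeight φ (s p.1))).withDensity (expWeight ρ p.2)
  obtain ⟨c, hc0, hμ⟩ := exists_hasExpMoments_sum_smul (ν := νs)
    fun p => (hs p.1).withDensity_expWeight hρ p.2.cast_nonneg
  have hac : (Measure.sum fun p => c p • νs p) ≪ ν := Measure.absolutelyContinuous_sum_left
    fun p => (((withDensity_absolutelyContinuous _ _).trans
      (withDensity_absolutelyContinuous _ _)).smul_left (c p))
  obtain ⟨δ, hδ, hint⟩ := h _ hac hμ.isFiniteMeasure hμ
  refine ⟨δ, hδ, fun i => hasExpMoments_of_nat fun n => ?_⟩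
  rw [lintegral_sum_measure] at hint
  have hterm := ENNReal.ne_top_of_tsum_ne_top hint.ne (i, n)
  rw [lintegral_smul_measure] at hterm
  rw [expWeight_add, withDensity_mul _ (measurable_expWeight hφ _)
    (measurable_expWeight hφ _), lintegral_withDensity_comm _ (measurable_expWeight hφ _)
    (measurable_expWeight hρ _)]
  exact ENNReal.lt_top_of_mul_ne_top_right hterm (hc0 (i, n))

theorem hasExpMoments_withDensity_expWeight (hρ : Measurable ρ) (hφ : Measurable φ)
    (hφ0 : 0 ≤ φ) (hν : HasExpMoments ρ ν)
    (h : ∀ μ, μ ≪ ν → IsFiniteMeasure μ → HasExpMoments ρ μ →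
      ∃ δ > 0, ∫⁻ x, expWeight φ δ x ∂μ < ⊤) (s : ℝ) :
    HasExpMoments ρ (ν.withDensity (expWeight φ s)) := by
  set B := {r | HasExpMoments ρ (ν.withDensity (expWeight φ r))}
  have hB : IsLowerSet B := fun _ _ hba ha =>
    ha.mono (withDensity_mono (ae_of_all _ (expWeight_mono hφ0 hba)))
  have h0 : (0 : ℝ) ∈ B := by simpa [B, expWeight_zero] using hν
  have hBuniv := hB.eq_univ_of_forall_exists_add ⟨0, h0⟩ fun _ hs =>
    exists_pos_forall_hasExpMoments_withDensity_add hρ hφ h hs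
  exact eq_univ_iff_forall.1 hBuniv s

end

theorem stmt_4_general (β : ℝ) (S : Set ℂ)
    (h : ∀ ν : Measure ℂ, IsFiniteMeasure ν → ν Sᶜ = 0 →
      (∀ t : ℝ, 0 ≤ t → ∫⁻ z, ENNReal.ofReal (Real.exp (t * z.re)) ∂ν < ⊤) →
      ∃ s > (0 : ℝ),
        ∫⁻ z, ENNReal.ofReal (Real.exp (s * ‖z‖ ^ (1 / β))) ∂ν < ⊤) :
    ∀ ν : Measure ℂ, IsFiniteMeasure ν → ν Sᶜ = 0 →
      (∀ t : ℝ, 0 ≤ t → ∫⁻ z, ENNReal.ofReal (Real.exp (t * z.re)) ∂ν < ⊤) →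
      ∀ s > (0 : ℝ), ∀ t ≥ (0 : ℝ),
        ∫⁻ z, ENNReal.ofReal
          (Real.exp (s * ‖z‖ ^ (1 / β)) * Real.exp (t * z.re)) ∂ν < ⊤ := by
  intro ν _ hνS hν s _ t ht
  have hφ : Measurable fun z : ℂ => ‖z‖ ^ (1 / β) := by fun_prop
  have key := hasExpMoments_withDensity_expWeight Complex.measurable_re hφ
    (fun z => by positivity) hν (fun μ hμν hμ hμmom => h μ hμ (hμν hνS) hμmom) s t ht
  rw [lintegral_withDensity_eq_lintegral_mul _ (measurable_expWeight hφ s)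
    (measurable_expWeight Complex.measurable_re t)] at key
  simpa only [Pi.mul_apply, expWeight, ← ENNReal.ofReal_mul (exp_pos _).le] using key

/-- Smoothness improvement ("jump") effect at the measure level: let `β ≥ 1` and `S ⊆ ℂ`
Borel. If every finite positive Borel measure `ν` carried by `S` with all exponential
moments satisfies `∫ e^(s·|λ|^(1/β)) dν < ∞` for SOME `s > 0`, then every such measure
satisfies `∫ e^(s·|λ|^(1/β)) · e^(t·Re λ) dν < ∞` for ALL `s > 0` and `t ≥ 0`. -/
theorem stmt_4 (β : ℝ) (hβ : 1 ≤ β) (S : Set ℂ) (hS : MeasurableSet S)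
    (h : ∀ ν : Measure ℂ, IsFiniteMeasure ν → ν Sᶜ = 0 →
      (∀ t : ℝ, 0 ≤ t → ∫⁻ z, ENNReal.ofReal (Real.exp (t * z.re)) ∂ν < ⊤) →
      ∃ s > (0 : ℝ),
        ∫⁻ z, ENNReal.ofReal (Real.exp (s * ‖z‖ ^ (1 / β))) ∂ν < ⊤) :
    ∀ ν : Measure ℂ, IsFiniteMeasure ν → ν Sᶜ = 0 →
      (∀ t : ℝ, 0 ≤ t → ∫⁻ z, ENNReal.ofReal (Real.exp (t * z.re)) ∂ν < ⊤) →
      ∀ s > (0 : ℝ), ∀ t ≥ (0 : ℝ),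
        ∫⁻ z, ENNReal.ofReal
          (Real.exp (s * ‖z‖ ^ (1 / β)) * Real.exp (t * z.re)) ∂ν < ⊤ :=
  stmt_4_general β S h
end
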